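/- For any probability measure μ on ℝ^d, any finite nonempty set P ⊆ ℝ^d, and any point x ∈ ℝ^d, D_K(μ, δ_x) ≤ √2 · Kpow_P(μ,x). -/

import Mathlib

open MeasureTheory

noncomputable def gaussK {d : ℕ} (σ : ℝ) (p x : EuclideanSpace ℝ (Fin d)) : ℝ :=
  σ ^ 2 * Real.exp (-‖p - x‖ ^ 2 / (2 * σ ^ 2))

noncomputable def kde {d : ℕ} (σ : ℝ) (μ : Measure (EuclideanSpace ℝ (Fin d)))
    (x : EuclideanSpace ℝ (Fin d)) : ℝ :=
  ∫ p, gaussK σ p x ∂μ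

noncomputable def kap {d : ℕ} (σ : ℝ) (μ ν : Measure (EuclideanSpace ℝ (Fin d))) : ℝ :=
  ∫ p, ∫ q, gaussK σ p q ∂ν ∂μ

noncomputable def DK {d : ℕ} (σ : ℝ) (μ ν : Measure (EuclideanSpace ℝ (Fin d))) : ℝ :=
  Real.sqrt (kap σ μ μ + kap σ ν ν - 2 * kap σ μ ν)

/-- kernel distance from a measure to a point -/
noncomputable def dKmu {d : ℕ} (σ : ℝ) (μ : Measure (EuclideanSpace ℝ (Fin d)))
    (x : EuclideanSpace ℝ (Fin d)) : ℝ :=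
  DK σ μ (Measure.dirac x)

/-- kernel distance between two points -/
noncomputable def DKpt {d : ℕ} (σ : ℝ) (p q : EuclideanSpace ℝ (Fin d)) : ℝ :=
  DK σ (Measure.dirac p) (Measure.dirac q)

/-- kernel power distance with respect to a finite nonempty point set `P` -/
noncomputable def Kpow {d : ℕ} (σ : ℝ) (P : Finset (EuclideanSpace ℝ (Fin d)))
    (hP : P.Nonempty) (μ : Measure (EuclideanSpace ℝ (Fin d)))
    (x : EuclideanSpace ℝ (Fin d)) : ℝ :=
  Real.sqrt (P.inf' hP fun p => DKpt σ p x ^ 2 + dKmu σ μ p ^ 2)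

/-! The Gaussian kernel is a convolution square: by Apollonius' identity
`‖p - u‖² + ‖x - u‖² = ‖p - x‖² / 2 + 2 ‖midpoint p x - u‖²`, so
`∫ exp(-b‖p - u‖²) exp(-b‖x - u‖²) du` is a constant multiple of `exp(-(b/2)‖p - x‖²)`.
Smoothing a finite measure with the bump `exp(-b‖·‖²)` therefore gives an `L²` function whose
inner products compute `κ`, so the kernel distance `D_K` is a multiple of an `L²` distance and
satisfies the triangle inequality. For the minimiser `p` in `Kpow`,
`D_K(μ, δ_x) ≤ d^K_μ(p) + D_K(p, x) ≤ √2 · √(D_K(p, x)² + d^K_μ(p)²)`. -/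

open Real
open scoped RealInnerProductSpace

section GaussianBump

variable {E : Type*} [NormedAddCommGroup E] {b : ℝ}

noncomputable def gaussBump (b : ℝ) (q u : E) : ℝ := exp (-b * ‖q - u‖ ^ 2)

theorem gaussBump_nonneg (b : ℝ) (q u : E) : 0 ≤ gaussBump b q u := (exp_pos _).le

theorem gaussBump_le_one (hb : 0 ≤ b) (q u : E) : gaussBump b q u ≤ 1 :=
  exp_le_one_iff.2 (by nlinarith [sq_nonneg ‖q - u‖])

theorem continuous_gaussBump (b : ℝ) :
    Continuous fun z : E × E => gaussBump b z.1 z.2 := by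
  unfold gaussBump; fun_prop

variable [InnerProductSpace ℝ E]

theorem gaussBump_mul_gaussBump (b : ℝ) (p x u : E) :
    gaussBump b p u * gaussBump b x u
      = exp (-(b / 2) * ‖p - x‖ ^ 2) * gaussBump (2 * b) (midpoint ℝ p x) u := by
  have apollonius :=
    EuclideanGeometry.dist_sq_add_dist_sq_eq_two_mul_dist_midpoint_sq_add_half_dist_sq u p x
  simp only [dist_eq_norm, norm_sub_rev u] at apollonius
  simp only [gaussBump, ← exp_add]
  congr 1
  linear_combination -b * apollonius

variable [FiniteDimensional ℝ E] [MeasurableSpace E] [BorelSpace E]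

theorem integrable_exp_neg_mul_sq_norm (hb : 0 < b) :
    Integrable fun v : E => exp (-b * ‖v‖ ^ 2) :=
  .of_integral_ne_zero (by rw [GaussianFourier.integral_rexp_neg_mul_sq_norm hb]; positivity)

theorem integral_exp_neg_mul_sq_norm_pos (hb : 0 < b) :
    0 < ∫ v : E, exp (-b * ‖v‖ ^ 2) :=
  integral_exp_pos (integrable_exp_neg_mul_sq_norm hb)

theorem integrable_gaussBump (hb : 0 < b) (q : E) : Integrable (gaussBump b q) :=
  (integrable_exp_neg_mul_sq_norm hb).comp_sub_left q

theorem integral_gaussBump (b : ℝ) (q : E) :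
    ∫ u, gaussBump b q u = ∫ v : E, exp (-b * ‖v‖ ^ 2) :=
  integral_sub_left_eq_self (fun v : E => exp (-b * ‖v‖ ^ 2)) volume q

theorem integral_gaussBump_mul_gaussBump (b : ℝ) (p x : E) :
    ∫ u, gaussBump b p u * gaussBump b x u
      = exp (-(b / 2) * ‖p - x‖ ^ 2) * ∫ v : E, exp (-(2 * b) * ‖v‖ ^ 2) := by
  simp only [gaussBump_mul_gaussBump, integral_const_mul, integral_gaussBump]

end GaussianBump

section GaussSmooth

variable {E : Type*} [NormedAddCommGroup E] [MeasurableSpace E] {b : ℝ}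

noncomputable def gaussSmooth (b : ℝ) (μ : Measure E) (u : E) : ℝ := ∫ q, gaussBump b q u ∂μ

theorem norm_gaussSmooth_le (hb : 0 ≤ b) (μ : Measure E) [IsFiniteMeasure μ] (u : E) :
    ‖gaussSmooth b μ u‖ ≤ μ.real Set.univ := by
  refine (norm_integral_le_of_norm_le_const (C := 1) (ae_of_all _ fun q => ?_)).trans_eq
    (one_mul _)
  rw [norm_of_nonneg (gaussBump_nonneg b q u)]
  exact gaussBump_le_one hb q u

variable [InnerProductSpace ℝ E] [FiniteDimensional ℝ E] [BorelSpace E]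
  (μ : Measure E) [IsFiniteMeasure μ]

theorem stronglyMeasurable_gaussSmooth (b : ℝ) : StronglyMeasurable (gaussSmooth b μ) :=
  StronglyMeasurable.integral_prod_left (f := fun q u => gaussBump b q u)
    (continuous_gaussBump b).stronglyMeasurable

theorem integrable_gaussBump_prod (hb : 0 < b) :
    Integrable (fun z : E × E => gaussBump b z.1 z.2) (μ.prod volume) := by
  refine (integrable_prod_iff (continuous_gaussBump b).aestronglyMeasurable).2
    ⟨ae_of_all _ (integrable_gaussBump hb), ?_⟩
  simp only [norm_of_nonneg (gaussBump_nonneg _ _ _), integral_gaussBump]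
  exact integrable_const _

theorem integrable_gaussSmooth (hb : 0 < b) : Integrable (gaussSmooth b μ) :=
  (integrable_gaussBump_prod μ hb).integral_prod_right

theorem memLp_gaussSmooth (hb : 0 < b) : MemLp (gaussSmooth b μ) 2 := by
  have hmeas : AEStronglyMeasurable (gaussSmooth b μ) :=
    (stronglyMeasurable_gaussSmooth μ b).aestronglyMeasurable
  refine (memLp_two_iff_integrable_sq hmeas).2 <|
    ((integrable_gaussSmooth μ hb).const_mul (μ.real Set.univ)).mono' (hmeas.pow 2)
      (ae_of_all _ fun u => ?_)
  have hle := (le_abs_self _).trans (norm_gaussSmooth_le hb.le μ u)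
  rw [norm_pow, Real.norm_eq_abs, sq_abs, sq]
  exact mul_le_mul_of_nonneg_right hle (integral_nonneg fun q => gaussBump_nonneg b q u)

theorem integral_integral_gaussBump_mul (hb : 0 < b) {g : E → ℝ} (hg : StronglyMeasurable g)
    {C : ℝ} (hgC : ∀ u, ‖g u‖ ≤ C) :
    ∫ q, ∫ u, gaussBump b q u * g u ∂volume ∂μ = ∫ u, gaussSmooth b μ u * g u := by
  have hint : Integrable (Function.uncurry fun q u => gaussBump b q u * g u) (μ.prod volume) := by
    refine ((integrable_gaussBump_prod μ hb).mul_const C).mono'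
      ((continuous_gaussBump b).aestronglyMeasurable.mul
        (hg.comp_measurable measurable_snd).aestronglyMeasurable) (ae_of_all _ fun z => ?_)
    rw [Function.uncurry_apply_pair, norm_mul, norm_of_nonneg (gaussBump_nonneg _ _ _)]
    exact mul_le_mul_of_nonneg_left (hgC z.2) (gaussBump_nonneg _ _ _)
  rw [integral_integral_swap hint]
  simp only [integral_mul_const, gaussSmooth]

end GaussSmooth

section GaussFeature

variable {E : Type*} [NormedAddCommGroup E] [InnerProductSpace ℝ E] [FiniteDimensional ℝ E]
  [MeasurableSpace E] [BorelSpace E] {b : ℝ}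

noncomputable def gaussFeature (hb : 0 < b) (μ : Measure E) [IsFiniteMeasure μ] :
    Lp ℝ 2 (volume : Measure E) :=
  (√(∫ v : E, exp (-(2 * b) * ‖v‖ ^ 2)))⁻¹ • (memLp_gaussSmooth μ hb).toLp

theorem exp_neg_mul_sq_norm_sub_eq_integral (hb : 0 < b) (p x : E) :
    exp (-(b / 2) * ‖p - x‖ ^ 2)
      = (∫ v : E, exp (-(2 * b) * ‖v‖ ^ 2))⁻¹ * ∫ u, gaussBump b p u * gaussBump b x u := by
  have hI := integral_exp_neg_mul_sq_norm_pos (E := E) (by positivity : 0 < 2 * b)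
  rw [integral_gaussBump_mul_gaussBump, mul_left_comm, inv_mul_cancel₀ hI.ne', mul_one]

theorem inner_gaussFeature (hb : 0 < b) (μ ν : Measure E) [IsFiniteMeasure μ]
    [IsFiniteMeasure ν] :
    ⟪gaussFeature hb μ, gaussFeature hb ν⟫
      = ∫ p, ∫ q, exp (-(b / 2) * ‖p - q‖ ^ 2) ∂ν ∂μ := by
  set I := ∫ v : E, exp (-(2 * b) * ‖v‖ ^ 2)
  have hI : 0 < I := integral_exp_neg_mul_sq_norm_pos (by positivity)
  have h_inner : ⟪gaussFeature hb μ, gaussFeature hb ν⟫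
      = I⁻¹ * ∫ u, gaussSmooth b μ u * gaussSmooth b ν u := by
    rw [gaussFeature, gaussFeature, real_inner_smul_left, real_inner_smul_right, ← mul_assoc,
      ← mul_inv, mul_self_sqrt hI.le, L2.inner_def]
    congr 1
    refine integral_congr_ae ?_
    filter_upwards [(memLp_gaussSmooth μ hb).coeFn_toLp, (memLp_gaussSmooth ν hb).coeFn_toLp]
      with u hμ hν
    simp [hμ, hν, mul_comm]
  have h_kde (p : E) : ∫ q, exp (-(b / 2) * ‖p - q‖ ^ 2) ∂ν
      = I⁻¹ * ∫ u, gaussBump b p u * gaussSmooth b ν u := by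
    simp_rw [norm_sub_rev p, exp_neg_mul_sq_norm_sub_eq_integral hb _ p, integral_const_mul]
    rw [integral_integral_gaussBump_mul ν hb (g := gaussBump b p)
      ((continuous_gaussBump b).comp (Continuous.prodMk_right p)).stronglyMeasurable
      (fun u => (norm_of_nonneg (gaussBump_nonneg b p u)).trans_le (gaussBump_le_one hb.le p u))]
    simp only [mul_comm (gaussSmooth b ν _), I]
  rw [h_inner]
  simp_rw [h_kde, integral_const_mul]
  rw [integral_integral_gaussBump_mul μ hb (stronglyMeasurable_gaussSmooth ν b)
    (norm_gaussSmooth_le hb.le ν)]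

end GaussFeature

section KernelDistance

variable {d : ℕ} {σ : ℝ}

theorem kap_eq_sq_mul_inner_gaussFeature (hb : 0 < (σ ^ 2)⁻¹)
    (μ ν : Measure (EuclideanSpace ℝ (Fin d))) [IsFiniteMeasure μ] [IsFiniteMeasure ν] :
    kap σ μ ν = σ ^ 2 * ⟪gaussFeature hb μ, gaussFeature hb ν⟫ := by
  rw [inner_gaussFeature, kap, ← integral_const_mul]
  congr 1; funext p
  rw [← integral_const_mul]
  congr 1; funext q
  rw [gaussK]
  ring_nf

theorem DK_eq_abs_mul_dist_gaussFeature (hb : 0 < (σ ^ 2)⁻¹)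
    (μ ν : Measure (EuclideanSpace ℝ (Fin d))) [IsFiniteMeasure μ] [IsFiniteMeasure ν] :
    DK σ μ ν = |σ| * dist (gaussFeature hb μ) (gaussFeature hb ν) := by
  rw [DK, kap_eq_sq_mul_inner_gaussFeature hb, kap_eq_sq_mul_inner_gaussFeature hb,
    kap_eq_sq_mul_inner_gaussFeature hb, real_inner_self_eq_norm_sq,
    real_inner_self_eq_norm_sq, dist_eq_norm, ← sqrt_sq (by positivity : 0 ≤ |σ| * _)]
  congr 1
  rw [mul_pow, sq_abs, norm_sub_sq_real]
  ring

theorem DK_le_add (hσ : σ ≠ 0) (μ ν ρ : Measure (EuclideanSpace ℝ (Fin d)))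
    [IsFiniteMeasure μ] [IsFiniteMeasure ν] [IsFiniteMeasure ρ] :
    DK σ μ ν ≤ DK σ μ ρ + DK σ ρ ν := by
  have hb : 0 < (σ ^ 2)⁻¹ := by positivity
  simp only [DK_eq_abs_mul_dist_gaussFeature hb, ← mul_add]
  exact mul_le_mul_of_nonneg_left (dist_triangle _ _ _) (abs_nonneg σ)

end KernelDistance

theorem add_le_sqrt_two_mul_sqrt_sq_add_sq (a b : ℝ) : a + b ≤ √2 * √(a ^ 2 + b ^ 2) := by
  rw [← sqrt_mul zero_le_two]
  exact (le_abs_self _).trans (abs_le_sqrt (by nlinarith [sq_nonneg (a - b)]))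

theorem kernel_power_distance_lower_general {d : ℕ} (σ : ℝ) (hσ : 0 < σ)
    (μ : Measure (EuclideanSpace ℝ (Fin d))) [IsProbabilityMeasure μ]
    (P : Finset (EuclideanSpace ℝ (Fin d))) (hP : P.Nonempty)
    (x : EuclideanSpace ℝ (Fin d)) :
    DK σ μ (Measure.dirac x) ≤ Real.sqrt 2 * Kpow σ P hP μ x := by
  obtain ⟨p, -, hp⟩ := P.exists_mem_eq_inf' hP fun p => DKpt σ p x ^ 2 + dKmu σ μ p ^ 2
  rw [Kpow, hp, add_comm]
  calc DK σ μ (Measure.dirac x) ≤ dKmu σ μ p + DKpt σ p x :=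
        DK_le_add hσ.ne' μ (Measure.dirac x) (Measure.dirac p)
    _ ≤ _ := add_le_sqrt_two_mul_sqrt_sq_add_sq _ _

/-- Lower bound: `D_K(μ, δ_x) ≤ √2 · Kpow_P(μ,x)` for any finite nonempty `P` and any `x`. -/
theorem kernel_power_distance_lower {d : ℕ} (hd : 1 ≤ d) (σ : ℝ) (hσ : 0 < σ)
    (μ : Measure (EuclideanSpace ℝ (Fin d))) [IsProbabilityMeasure μ]
    (P : Finset (EuclideanSpace ℝ (Fin d))) (hP : P.Nonempty)
    (x : EuclideanSpace ℝ (Fin d)) :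
    DK σ μ (Measure.dirac x) ≤ Real.sqrt 2 * Kpow σ P hP μ x :=
  kernel_power_distance_lower_general σ hσ μ P hP x
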